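/- Let G = ([n], E) be a graph and consider the max-min pricing instance with marginals F_1(G),...,F_n(G) defined from G. If G has an independent set S (no two vertices of S are adjacent in G), then the optimal robust revenue guarantee satisfies R*(G) ≥ (1/2)·(1 − √n / 2^{n−1})·|S|. In fact, the pricing p with p_i = 2^{i·n − 1} for i ∈ S and p_i = ∞ for i ∉ S satisfies R(p, F; G) ≥ (1/2)·(1 − √n / 2^{n−1})·|S| for every compatible joint distribution F. -/

import Mathlib

open MeasureTheory
open scoped ENNReal NNReal

noncomputable section

/-- A buyer's purchase rule for `n` items: given a valuation profile and a vector of item prices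
(in `[0,∞]`), `choose` returns the purchased item (or `none` if nothing is purchased).
The axioms say: a purchased item has a finite price and yields nonnegative utility
(`feasible`), the purchased item maximizes utility among all items (`optimal`), and the buyer
does purchase whenever some item yields nonnegative utility (`active`). Ties among
utility-maximizing items are broken according to the (fixed) rule embodied by `choose`. -/
structure BuyerRule (n : ℕ) where
  choose : (Fin n → ℝ) → (Fin n → ℝ≥0∞) → Option (Fin n)
  feasible : ∀ v p j, choose v p = some j → p j ≠ ⊤ ∧ (p j).toReal ≤ v j
  optimal : ∀ v p j k, choose v p = some j → p k ≠ ⊤ →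
      v k - (p k).toReal ≤ v j - (p j).toReal
  active : ∀ v p, (∃ k, p k ≠ ⊤ ∧ (p k).toReal ≤ v k) → (choose v p).isSome = true

/-- The seller's revenue from valuation profile `v` under pricing `p`. -/
def BuyerRule.revenue {n : ℕ} (B : BuyerRule n) (p : Fin n → ℝ≥0∞) (v : Fin n → ℝ) : ℝ≥0∞ :=
  (B.choose v p).elim 0 (fun j => p j)

/-- A joint distribution `F` on valuation profiles is compatible with the marginals `marg`
if it is a probability measure whose `j`-th one-dimensional marginal is `marg j` for every `j`. -/
def Compatible {n : ℕ} (marg : Fin n → Measure ℝ) (F : Measure (Fin n → ℝ)) : Prop :=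
  IsProbabilityMeasure F ∧ ∀ j, F.map (fun v => v j) = marg j

/-- `R(p,F)`: the expected revenue of pricing `p` under joint distribution `F`. -/
def expRev {n : ℕ} (B : BuyerRule n) (p : Fin n → ℝ≥0∞) (F : Measure (Fin n → ℝ)) : ℝ≥0∞ :=
  ∫⁻ v, B.revenue p v ∂F

/-- `R(p)`: the robust revenue guarantee of `p`, the infimum of `R(p,F)` over compatible `F`. -/
def robustRev {n : ℕ} (B : BuyerRule n) (marg : Fin n → Measure ℝ) (p : Fin n → ℝ≥0∞) : ℝ≥0∞ :=
  ⨅ (F : Measure (Fin n → ℝ)) (_ : Compatible marg F), expRev B p F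

/-- `R*`: the optimal robust revenue guarantee over all pricings. -/
def optRobust {n : ℕ} (B : BuyerRule n) (marg : Fin n → Measure ℝ) : ℝ≥0∞ :=
  ⨆ p : Fin n → ℝ≥0∞, robustRev B marg p

/-- The marginal distribution `F_i(G)` of the hardness instance built from the graph `G`
(item `i : Fin n` represents the vertex `i+1 ∈ [n]` of the paper): it takes the value
`2^((i+1)·n)` with probability `2^(-(i+1)·n)`; additionally, for each vertex `j > i` adjacent
to `i`, it takes the value `2^((j+1)·n)` with probability `2^(-(j+1)·n)/√n`; with all remaining
probability it takes the value `0`. -/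
def margG (n : ℕ) (G : SimpleGraph (Fin n)) [DecidableRel G.Adj] (i : Fin n) : Measure ℝ :=
  ENNReal.ofReal (((2 : ℝ) ^ (((i : ℕ) + 1) * n))⁻¹) •
      Measure.dirac ((2 : ℝ) ^ (((i : ℕ) + 1) * n))
    + (∑ j : Fin n,
        if i < j ∧ G.Adj i j then
          ENNReal.ofReal ((((2 : ℝ) ^ (((j : ℕ) + 1) * n))⁻¹) / Real.sqrt n) •
            Measure.dirac ((2 : ℝ) ^ (((j : ℕ) + 1) * n))
        else 0)
    + (1 - ENNReal.ofReal (((2 : ℝ) ^ (((i : ℕ) + 1) * n))⁻¹)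
        - ∑ j : Fin n,
            if i < j ∧ G.Adj i j then
              ENNReal.ofReal ((((2 : ℝ) ^ (((j : ℕ) + 1) * n))⁻¹) / Real.sqrt n)
            else 0) •
        Measure.dirac (0 : ℝ)

/-! Price each item `j ∈ S` at half its own atom `a_j = 2^((j+1)n)`. On the event that
`v_j = a_j`, every value lies in the support of its marginal, and no item of `S` takes an atom
`a_l` with `l > j`, the buyer buys exactly `j`. Indeed it buys some `k ∈ S` with
`v_k - a_k/2 ≥ a_j/2`: if `v_k = a_k` this forces `k ≥ j`, and `k > j` is excluded; if `v_k` is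
a foreign atom `a_l` (`l` a later neighbour of `k`), then `l ∉ S` by independence, `l > j` is
excluded, and `l < j` makes `a_l ≤ a_j/2` too small. By a union bound this event has probability
at least `a_j⁻¹ - (1 + |S|/√n) ∑_{l>j} a_l⁻¹`, and the tail is geometric with ratio `2^{-n}`, so
item `j` earns at least `(1 - √n / 2^(n-1)) / 2`. The last estimate needs `n ≥ 4`, which a square
`n > 1` satisfies; for `n ≤ 1` the bound is not positive. -/

def atomVal (n : ℕ) (l : Fin n) : ℝ := (2 : ℝ) ^ (((l : ℕ) + 1) * n)

lemma atomVal_pos {n : ℕ} (l : Fin n) : 0 < atomVal n l := by unfold atomVal; positivity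

lemma atomVal_strictMono (n : ℕ) : StrictMono (atomVal n) := fun k _ h =>
  pow_lt_pow_right₀ one_lt_two (Nat.mul_lt_mul_of_pos_right (Nat.succ_lt_succ h) (Fin.pos k))

lemma atomVal_inv_eq_pow {n : ℕ} (l : Fin n) :
    (atomVal n l)⁻¹ = ((2 ^ n : ℝ)⁻¹) ^ ((l : ℕ) + 1) := by
  rw [atomVal, mul_comm, pow_mul, inv_pow]

lemma two_mul_atomVal_le_of_lt {n : ℕ} {l j : Fin n} (h : l < j) :
    2 * atomVal n l ≤ atomVal n j := by
  have hn : 1 ≤ n := Fin.pos j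
  have : ((l : ℕ) + 1) * n + 1 ≤ ((j : ℕ) + 1) * n := by
    have : (l : ℕ) + 1 ≤ j := h
    nlinarith
  calc 2 * atomVal n l = 2 ^ (((l : ℕ) + 1) * n + 1) := by rw [atomVal, pow_succ, mul_comm]
    _ ≤ atomVal n j := pow_le_pow_right₀ one_le_two this

def margGSupport {n : ℕ} (G : SimpleGraph (Fin n)) (k : Fin n) : Set ℝ :=
  {0, atomVal n k} ∪ atomVal n '' {l | k < l ∧ G.Adj k l}

lemma measurableSet_margGSupport {n : ℕ} (G : SimpleGraph (Fin n)) (k : Fin n) :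
    MeasurableSet (margGSupport G k) :=
  ((Set.toFinite _).union ((Set.toFinite _).image _)).measurableSet

section margG

variable {n : ℕ} (G : SimpleGraph (Fin n)) [DecidableRel G.Adj]

-- Avoiding `0` drops the leftover mass at `0`, a truncated difference in `ℝ≥0∞`.
lemma margG_apply_of_zero_notMem (k : Fin n) {T : Set ℝ} (h0 : (0 : ℝ) ∉ T) :
    margG n G k T = ENNReal.ofReal (atomVal n k)⁻¹ * T.indicator 1 (atomVal n k) +
      ∑ l, if k < l ∧ G.Adj k l then
        ENNReal.ofReal ((atomVal n l)⁻¹ / √n) * T.indicator 1 (atomVal n l) else 0 := by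
  simp only [margG, Measure.coe_add, Measure.coe_smul, Measure.coe_finsetSum, Pi.add_apply,
    Pi.smul_apply, Finset.sum_apply, apply_ite (fun μ : Measure ℝ => μ T), Measure.dirac_apply,
    Set.indicator_of_notMem h0, Measure.coe_zero, Pi.zero_apply, smul_eq_mul, mul_zero, add_zero,
    atomVal]

lemma margG_singleton_self (k : Fin n) :
    margG n G k {atomVal n k} = ENNReal.ofReal (atomVal n k)⁻¹ := by
  rw [margG_apply_of_zero_notMem G k (by simpa using (atomVal_pos k).ne), Finset.sum_eq_zero]
  · simp
  · intro l _
    split_ifs with h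
    · simp [(atomVal_strictMono n).injective.ne h.1.ne']
    · rfl

lemma margG_singleton_le_of_ne {k l : Fin n} (hkl : k ≠ l) :
    margG n G k {atomVal n l} ≤ ENNReal.ofReal ((atomVal n l)⁻¹ / √n) := by
  rw [margG_apply_of_zero_notMem G k (by simpa using (atomVal_pos l).ne),
    Finset.sum_eq_single l (fun l' _ hl' => by simp [(atomVal_strictMono n).injective.ne hl'])
      (fun h => absurd (Finset.mem_univ l) h)]
  split_ifs <;> simp [(atomVal_strictMono n).injective.ne hkl]

lemma margG_compl_margGSupport (k : Fin n) : margG n G k (margGSupport G k)ᶜ = 0 := by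
  have hmem : ∀ x ∈ margGSupport G k, (margGSupport G k)ᶜ.indicator (1 : ℝ → ℝ≥0∞) x = 0 :=
    fun x hx => Set.indicator_of_notMem (not_not.2 hx) _
  rw [margG_apply_of_zero_notMem G k (by simp [margGSupport]),
    hmem _ (by simp [margGSupport]), mul_zero, zero_add]
  refine Finset.sum_eq_zero fun l _ => ?_
  split_ifs with h
  · rw [hmem _ (Or.inr ⟨l, h, rfl⟩), mul_zero]
  · rfl

end margG

section Events

variable {n : ℕ} (G : SimpleGraph (Fin n)) (S : Finset (Fin n))

def offSupportEvent : Set (Fin n → ℝ) :=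
  ⋃ k, (fun v => v k) ⁻¹' (margGSupport G k)ᶜ

def highAtomEvent (j : Fin n) : Set (Fin n → ℝ) :=
  ⋃ k ∈ S, ⋃ l ∈ Finset.Ioi j, (fun v => v k) ⁻¹' {atomVal n l}

def goodEvent (j : Fin n) : Set (Fin n → ℝ) :=
  (fun v => v j) ⁻¹' {atomVal n j} \ (offSupportEvent G ∪ highAtomEvent S j)

lemma measurableSet_goodEvent (j : Fin n) : MeasurableSet (goodEvent G S j) :=
  ((measurableSet_singleton _).preimage (measurable_pi_apply j)).diff <|
    (MeasurableSet.iUnion fun k =>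
      (measurableSet_margGSupport G k).compl.preimage (measurable_pi_apply k)).union <|
    Finset.measurableSet_biUnion _ fun k _ => Finset.measurableSet_biUnion _ fun _ _ =>
      (measurableSet_singleton _).preimage (measurable_pi_apply k)

end Events

def halfAtomPricing {n : ℕ} (S : Finset (Fin n)) (i : Fin n) : ℝ≥0∞ :=
  if i ∈ S then ENNReal.ofReal ((2 : ℝ) ^ (((i : ℕ) + 1) * n - 1)) else ⊤

section Pricing

variable {n : ℕ} {S : Finset (Fin n)} {k : Fin n}

lemma halfAtomPricing_ne_top (hk : k ∈ S) : halfAtomPricing S k ≠ ⊤ := by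
  simp [halfAtomPricing, hk]

lemma mem_of_halfAtomPricing_ne_top (hk : halfAtomPricing S k ≠ ⊤) : k ∈ S := by
  by_contra h
  simp [halfAtomPricing, h] at hk

lemma halfAtomPricing_toReal (hk : k ∈ S) : (halfAtomPricing S k).toReal = atomVal n k / 2 := by
  have hpos : 1 ≤ ((k : ℕ) + 1) * n := Nat.mul_pos k.val.succ_pos (Fin.pos k)
  rw [halfAtomPricing, if_pos hk, ENNReal.toReal_ofReal (by positivity), atomVal,
    eq_div_iff two_ne_zero, ← pow_succ, Nat.sub_add_cancel hpos]

end Pricing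

section Buyer

variable {n : ℕ} {G : SimpleGraph (Fin n)} {S : Finset (Fin n)}

lemma BuyerRule.choose_eq_of_mem_goodEvent (B : BuyerRule n)
    (hS : ∀ i ∈ S, ∀ j ∈ S, ¬ G.Adj i j) {j : Fin n} (hj : j ∈ S) {v : Fin n → ℝ}
    (hv : v ∈ goodEvent G S j) : B.choose v (halfAtomPricing S) = some j := by
  simp only [goodEvent, offSupportEvent, highAtomEvent, Set.mem_sdiff, Set.mem_preimage,
    Set.mem_singleton_iff, Set.mem_union, Set.mem_iUnion, Set.mem_compl_iff, Finset.mem_Ioi,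
    exists_prop, not_or, not_exists, not_not, not_and] at hv
  obtain ⟨hvj, hsupp, hnoHigh⟩ := hv
  have hpj := halfAtomPricing_toReal hj
  obtain ⟨k, hk⟩ := Option.isSome_iff_exists.1 <| B.active v _
    ⟨j, halfAtomPricing_ne_top hj, by rw [hpj, hvj]; linarith [atomVal_pos j]⟩
  have hkS := mem_of_halfAtomPricing_ne_top (B.feasible v _ k hk).1
  have hopt := B.optimal v _ k j hk (halfAtomPricing_ne_top hj)
  rw [hvj, hpj, halfAtomPricing_toReal hkS] at hopt
  rcases hsupp k with (hzero | (hown : v k = atomVal n k)) | ⟨l, ⟨hkl, hadj⟩, hl⟩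
  · linarith [atomVal_pos j, atomVal_pos k]
  · have hjk : ¬ k < j := fun h => by linarith [atomVal_strictMono n h]
    have hkj : ¬ j < k := fun h => hnoHigh k hkS k h hown
    rw [hk, le_antisymm (not_lt.1 hkj) (not_lt.1 hjk)]
  · have hlS : l ∉ S := fun hlS => hS k hkS l hlS hadj
    have hlj : l < j := lt_of_le_of_ne (not_lt.1 fun h => hnoHigh k hkS l h hl.symm)
      (fun h => hlS (h ▸ hj))
    linarith [two_mul_atomVal_le_of_lt hlj, atomVal_pos k]

lemma BuyerRule.sum_indicator_goodEvent_le_revenue (B : BuyerRule n)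
    (hS : ∀ i ∈ S, ∀ j ∈ S, ¬ G.Adj i j) (v : Fin n → ℝ) :
    ∑ j ∈ S, (goodEvent G S j).indicator (fun _ => halfAtomPricing S j) v ≤
      B.revenue (halfAtomPricing S) v := by
  by_cases h : ∃ j ∈ S, v ∈ goodEvent G S j
  · obtain ⟨j, hj, hv⟩ := h
    have hchoose := B.choose_eq_of_mem_goodEvent hS hj hv
    have hunique : ∀ i ∈ S, i ≠ j →
        (goodEvent G S i).indicator (fun _ => halfAtomPricing S i) v = 0 :=
      fun i hi hij => Set.indicator_of_notMem (fun hvi => hij <| Option.some_injective _ <|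
        (B.choose_eq_of_mem_goodEvent hS hi hvi).symm.trans hchoose) _
    rw [Finset.sum_eq_single_of_mem j hj hunique, Set.indicator_of_mem hv, BuyerRule.revenue,
      hchoose]
    rfl
  · push Not at h
    rw [Finset.sum_eq_zero fun j hj => Set.indicator_of_notMem (h j hj) _]
    exact zero_le

lemma BuyerRule.sum_mul_measure_goodEvent_le_expRev (B : BuyerRule n)
    (hS : ∀ i ∈ S, ∀ j ∈ S, ¬ G.Adj i j) (F : Measure (Fin n → ℝ)) :
    ∑ j ∈ S, halfAtomPricing S j * F (goodEvent G S j) ≤ expRev B (halfAtomPricing S) F :=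
  calc ∑ j ∈ S, halfAtomPricing S j * F (goodEvent G S j)
      = ∫⁻ v, ∑ j ∈ S, (goodEvent G S j).indicator (fun _ => halfAtomPricing S j) v ∂F := by
        rw [lintegral_finsetSum _ fun j _ =>
          measurable_const.indicator (measurableSet_goodEvent G S j)]
        simp only [lintegral_indicator_const (measurableSet_goodEvent G S _)]
    _ ≤ expRev B (halfAtomPricing S) F :=
        lintegral_mono (B.sum_indicator_goodEvent_le_revenue hS)

end Buyer

lemma Compatible.measure_preimage_eval {n : ℕ} {marg : Fin n → Measure ℝ}
    {F : Measure (Fin n → ℝ)} (hF : Compatible marg F) (k : Fin n) {T : Set ℝ}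
    (hT : MeasurableSet T) : F ((fun v => v k) ⁻¹' T) = marg k T := by
  rw [← Measure.map_apply (measurable_pi_apply k) hT, hF.2 k]

section Measure

variable {n : ℕ} {G : SimpleGraph (Fin n)} [DecidableRel G.Adj] {F : Measure (Fin n → ℝ)}

lemma margG_singleton_toReal_le (k l : Fin n) :
    (margG n G k {atomVal n l}).toReal ≤
      (if k = l then (atomVal n l)⁻¹ else 0) + (atomVal n l)⁻¹ / √n := by
  by_cases hkl : k = l
  · subst hkl
    rw [margG_singleton_self, ENNReal.toReal_ofReal (inv_nonneg.2 (atomVal_pos k).le), if_pos rfl]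
    exact le_add_of_nonneg_right (div_nonneg (inv_nonneg.2 (atomVal_pos k).le) (Real.sqrt_nonneg _))
  · rw [if_neg hkl, zero_add]
    exact ENNReal.toReal_le_of_le_ofReal
      (div_nonneg (inv_nonneg.2 (atomVal_pos l).le) (Real.sqrt_nonneg _))
      (margG_singleton_le_of_ne G hkl)

lemma sum_margG_singleton_toReal_le (S : Finset (Fin n)) (l : Fin n) :
    ∑ k ∈ S, (margG n G k {atomVal n l}).toReal ≤ (1 + S.card / √n) * (atomVal n l)⁻¹ := by
  have hl : 0 ≤ (atomVal n l)⁻¹ := inv_nonneg.2 (atomVal_pos l).le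
  calc ∑ k ∈ S, (margG n G k {atomVal n l}).toReal
      ≤ ∑ k ∈ S, ((if k = l then (atomVal n l)⁻¹ else 0) + (atomVal n l)⁻¹ / √n) :=
        Finset.sum_le_sum fun k _ => margG_singleton_toReal_le k l
    _ = (if l ∈ S then (atomVal n l)⁻¹ else 0) + S.card * ((atomVal n l)⁻¹ / √n) := by
        rw [Finset.sum_add_distrib, Finset.sum_ite_eq', Finset.sum_const, nsmul_eq_mul]
    _ ≤ (atomVal n l)⁻¹ + S.card * ((atomVal n l)⁻¹ / √n) := by
        gcongr
        split_ifs <;> simp [hl]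
    _ = (1 + S.card / √n) * (atomVal n l)⁻¹ := by ring

lemma Compatible.measure_offSupportEvent (hF : Compatible (margG n G) F) :
    F (offSupportEvent G) = 0 :=
  measure_iUnion_null fun k => by
    rw [hF.measure_preimage_eval k (measurableSet_margGSupport G k).compl,
      margG_compl_margGSupport]

lemma Compatible.measureReal_highAtomEvent_le (hF : Compatible (margG n G) F)
    (S : Finset (Fin n)) (j : Fin n) :
    F.real (highAtomEvent S j) ≤ (1 + S.card / √n) * ∑ l ∈ Finset.Ioi j, (atomVal n l)⁻¹ := by
  have hatom : ∀ k l, F.real ((fun v => v k) ⁻¹' {atomVal n l}) =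
      (margG n G k {atomVal n l}).toReal := fun k l => by
    rw [measureReal_def, hF.measure_preimage_eval k (measurableSet_singleton _)]
  calc F.real (highAtomEvent S j)
      ≤ ∑ k ∈ S, F.real (⋃ l ∈ Finset.Ioi j, (fun v => v k) ⁻¹' {atomVal n l}) :=
        measureReal_biUnion_finset_le _ _
    _ ≤ ∑ k ∈ S, ∑ l ∈ Finset.Ioi j, (margG n G k {atomVal n l}).toReal :=
        Finset.sum_le_sum fun k _ => (measureReal_biUnion_finset_le _ _).trans_eq <|
          Finset.sum_congr rfl fun l _ => hatom k l
    _ ≤ ∑ l ∈ Finset.Ioi j, (1 + S.card / √n) * (atomVal n l)⁻¹ := by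
        rw [Finset.sum_comm]
        exact Finset.sum_le_sum fun l _ => sum_margG_singleton_toReal_le S l
    _ = (1 + S.card / √n) * ∑ l ∈ Finset.Ioi j, (atomVal n l)⁻¹ := (Finset.mul_sum ..).symm

lemma Compatible.measureReal_goodEvent_ge (hF : Compatible (margG n G) F)
    (S : Finset (Fin n)) (j : Fin n) :
    (atomVal n j)⁻¹ - (1 + S.card / √n) * ∑ l ∈ Finset.Ioi j, (atomVal n l)⁻¹ ≤
      F.real (goodEvent G S j) := by
  have := hF.1
  have hatom : F.real ((fun v => v j) ⁻¹' {atomVal n j}) = (atomVal n j)⁻¹ := by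
    rw [measureReal_def, hF.measure_preimage_eval j (measurableSet_singleton _),
      margG_singleton_self, ENNReal.toReal_ofReal (inv_nonneg.2 (atomVal_pos j).le)]
  have hnull : F.real (offSupportEvent G) = 0 := by
    rw [measureReal_def, hF.measure_offSupportEvent, ENNReal.toReal_zero]
  have hsub : (fun v => v j) ⁻¹' {atomVal n j} ⊆
      goodEvent G S j ∪ (offSupportEvent G ∪ highAtomEvent S j) := by
    rw [goodEvent, Set.sdiff_union_self]
    exact Set.subset_union_left
  have hcover : F.real ((fun v => v j) ⁻¹' {atomVal n j}) ≤
      F.real (goodEvent G S j) + (F.real (offSupportEvent G) + F.real (highAtomEvent S j)) :=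
    (measureReal_mono hsub).trans
      ((measureReal_union_le _ _).trans (add_le_add_right (measureReal_union_le _ _) _))
  linarith [hF.measureReal_highAtomEvent_le S j]

end Measure

lemma sum_Ioi_pow_succ_le {n : ℕ} {r : ℝ} (hr0 : 0 ≤ r) (hr1 : r < 1) (j : Fin n) :
    ∑ l ∈ Finset.Ioi j, r ^ ((l : ℕ) + 1) ≤ r ^ ((j : ℕ) + 2) / (1 - r) := by
  have hmap := Finset.sum_map (Finset.Ioi j) Fin.valEmbedding (fun i => r ^ (i + 1))
  rw [Fin.map_valEmbedding_Ioi, ← Finset.Ico_add_one_left_eq_Ioo] at hmap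
  calc ∑ l ∈ Finset.Ioi j, r ^ ((l : ℕ) + 1)
      = r * ∑ i ∈ Finset.Ico ((j : ℕ) + 1) n, r ^ i := by
        simp only [Fin.valEmbedding_apply] at hmap
        rw [← hmap, Finset.mul_sum]
        simp only [pow_succ, mul_comm]
    _ ≤ r * (r ^ ((j : ℕ) + 1) / (1 - r)) :=
        mul_le_mul_of_nonneg_left (geom_sum_Ico_le_of_lt_one hr0 hr1) hr0
    _ = r ^ ((j : ℕ) + 2) / (1 - r) := by ring

lemma robustBound_le_half_sub {n : ℕ} (hn : 4 ≤ n) {c : ℝ} (hc : c ≤ n) :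
    (1 / 2) * (1 - √n / 2 ^ (n - 1)) ≤ 1 / 2 - (1 + c / √n) / (2 * (2 ^ n - 1)) := by
  have hs2 : 2 ≤ √(n : ℝ) := Real.le_sqrt_of_sq_le (by norm_num; exact_mod_cast hn)
  have hss : √(n : ℝ) * √n = n := Real.mul_self_sqrt (Nat.cast_nonneg n)
  have hx : (16 : ℝ) ≤ 2 ^ n := by
    calc (16 : ℝ) = 2 ^ 4 := by norm_num
      _ ≤ 2 ^ n := pow_le_pow_right₀ one_le_two hn
  have hhalf : (2 : ℝ) ^ (n - 1) = 2 ^ n / 2 := by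
    rw [eq_div_iff two_ne_zero, ← pow_succ, Nat.sub_add_cancel (by omega)]
  have hcs : c / √n ≤ √n := by rw [div_le_iff₀ (by linarith)]; linarith
  rw [hhalf]
  set s := √(n : ℝ)
  set x : ℝ := 2 ^ n
  have hloss : (1 + c / s) / (2 * (x - 1)) ≤ s / x := by
    rw [div_le_div_iff₀ (by linarith) (by linarith)]
    nlinarith [mul_le_mul_of_nonneg_right hcs (by linarith : (0 : ℝ) ≤ x),
      mul_nonneg (by linarith : (0 : ℝ) ≤ s - 2) (by linarith : (0 : ℝ) ≤ x - 16)]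
  have hbound : 1 / 2 * (1 - s / (x / 2)) = 1 / 2 - s / x := by field_simp
  linarith

lemma Compatible.robustBound_le_price_mul_measureReal {n : ℕ} (hn : 4 ≤ n)
    {G : SimpleGraph (Fin n)} [DecidableRel G.Adj] {F : Measure (Fin n → ℝ)}
    (hF : Compatible (margG n G) F) {S : Finset (Fin n)} {j : Fin n} (hj : j ∈ S) :
    (1 / 2) * (1 - √n / 2 ^ (n - 1)) ≤
      (halfAtomPricing S j).toReal * F.real (goodEvent G S j) := by
  set x : ℝ := 2 ^ n
  set K : ℝ := 1 + S.card / √n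
  have hx : 1 < x := one_lt_pow₀ one_lt_two (by omega)
  have hgeom : ∑ l ∈ Finset.Ioi j, (atomVal n l)⁻¹ ≤ x⁻¹ ^ ((j : ℕ) + 2) / (1 - x⁻¹) := by
    simp only [atomVal_inv_eq_pow]
    exact sum_Ioi_pow_succ_le (by positivity) (inv_lt_one_of_one_lt₀ hx) j
  have hcard : (S.card : ℝ) ≤ n := by exact_mod_cast S.card_le_univ.trans (Fintype.card_fin n).le
  have ha : atomVal n j = x ^ ((j : ℕ) + 1) := by rw [atomVal, mul_comm, pow_mul]
  have ha0 : 0 ≤ atomVal n j / 2 := by linarith [atomVal_pos j]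
  calc (1 / 2) * (1 - √n / 2 ^ (n - 1))
      ≤ 1 / 2 - K / (2 * (x - 1)) := robustBound_le_half_sub hn hcard
    _ = atomVal n j / 2 * ((atomVal n j)⁻¹ - K * (x⁻¹ ^ ((j : ℕ) + 2) / (1 - x⁻¹))) := by
        have : x - 1 ≠ 0 := by linarith
        rw [ha, inv_pow, pow_succ x ((j : ℕ) + 1)]
        field_simp
    _ ≤ atomVal n j / 2 * ((atomVal n j)⁻¹ - K * ∑ l ∈ Finset.Ioi j, (atomVal n l)⁻¹) := by
        gcongr
    _ ≤ atomVal n j / 2 * F.real (goodEvent G S j) :=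
        mul_le_mul_of_nonneg_left (hF.measureReal_goodEvent_ge S j) ha0
    _ = (halfAtomPricing S j).toReal * F.real (goodEvent G S j) := by
        rw [halfAtomPricing_toReal hj]

lemma BuyerRule.ofReal_robustBound_mul_card_le_expRev {n : ℕ} (hn : 4 ≤ n)
    {G : SimpleGraph (Fin n)} [DecidableRel G.Adj] (B : BuyerRule n) {S : Finset (Fin n)}
    (hS : ∀ i ∈ S, ∀ j ∈ S, ¬ G.Adj i j) {F : Measure (Fin n → ℝ)}
    (hF : Compatible (margG n G) F) :
    ENNReal.ofReal ((1 / 2) * (1 - √n / 2 ^ (n - 1)) * S.card) ≤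
      expRev B (halfAtomPricing S) F := by
  have := hF.1
  calc ENNReal.ofReal ((1 / 2) * (1 - √n / 2 ^ (n - 1)) * S.card)
      = ENNReal.ofReal (∑ _j ∈ S, (1 / 2) * (1 - √n / 2 ^ (n - 1))) := by
        rw [Finset.sum_const, nsmul_eq_mul, mul_comm]
    _ ≤ ENNReal.ofReal (∑ j ∈ S, (halfAtomPricing S j).toReal * F.real (goodEvent G S j)) :=
        ENNReal.ofReal_le_ofReal <| Finset.sum_le_sum fun j hj =>
          hF.robustBound_le_price_mul_measureReal hn hj
    _ = ∑ j ∈ S, halfAtomPricing S j * F (goodEvent G S j) := by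
        rw [ENNReal.ofReal_sum_of_nonneg fun j _ => by positivity]
        refine Finset.sum_congr rfl fun j hj => ?_
        rw [ENNReal.ofReal_mul ENNReal.toReal_nonneg,
          ENNReal.ofReal_toReal (halfAtomPricing_ne_top hj), ofReal_measureReal]
    _ ≤ expRev B (halfAtomPricing S) F := B.sum_mul_measure_goodEvent_le_expRev hS F

theorem independent_set_gives_robust_revenue_lower_bound_general
    (n : ℕ) (hsq : ∃ m : ℕ, n = m * m)
    (G : SimpleGraph (Fin n)) [DecidableRel G.Adj]
    (B : BuyerRule n)
    (S : Finset (Fin n)) (hS : ∀ i ∈ S, ∀ j ∈ S, ¬ G.Adj i j)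
    (p : Fin n → ℝ≥0∞)
    (hp : ∀ i : Fin n,
      p i = if i ∈ S then ENNReal.ofReal ((2 : ℝ) ^ (((i : ℕ) + 1) * n - 1)) else ⊤) :
    (∀ F : Measure (Fin n → ℝ), Compatible (margG n G) F →
        ENNReal.ofReal ((1 / 2) * (1 - Real.sqrt n / 2 ^ (n - 1)) * S.card) ≤ expRev B p F) ∧
    ENNReal.ofReal ((1 / 2) * (1 - Real.sqrt n / 2 ^ (n - 1)) * S.card) ≤
      optRobust B (margG n G) := by
  have hrev : ∀ F : Measure (Fin n → ℝ), Compatible (margG n G) F →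
      ENNReal.ofReal ((1 / 2) * (1 - Real.sqrt n / 2 ^ (n - 1)) * S.card) ≤ expRev B p F := by
    obtain rfl : p = halfAtomPricing S := funext hp
    obtain ⟨m, rfl⟩ := hsq
    intro F hF
    rcases le_or_gt m 1 with hm | hm
    · interval_cases m
      · simp [Nat.le_zero.1 (S.card_le_univ.trans_eq (Fintype.card_fin _))]
      · simp
    · exact B.ofReal_robustBound_mul_card_le_expRev (by nlinarith) hS hF
  exact ⟨hrev, le_iSup_of_le p (le_iInf₂ hrev)⟩

/-- If the graph `G` has an independent set `S`, then for the hardness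
instance with marginals `F_i(G)`, the pricing `p` with `p i = 2^((i+1)·n − 1)` for `i ∈ S` and
`p i = ∞` for `i ∉ S` satisfies `R(p,F;G) ≥ (1/2)·(1 − √n/2^(n−1))·|S|` for every compatible
joint distribution `F`; consequently `R*(G) ≥ (1/2)·(1 − √n/2^(n−1))·|S|`. -/
theorem independent_set_gives_robust_revenue_lower_bound
    (n : ℕ) (hn : 0 < n) (hsq : ∃ m : ℕ, n = m * m)
    (G : SimpleGraph (Fin n)) [DecidableRel G.Adj]
    (B : BuyerRule n)
    (S : Finset (Fin n)) (hS : ∀ i ∈ S, ∀ j ∈ S, ¬ G.Adj i j)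
    (p : Fin n → ℝ≥0∞)
    (hp : ∀ i : Fin n,
      p i = if i ∈ S then ENNReal.ofReal ((2 : ℝ) ^ (((i : ℕ) + 1) * n - 1)) else ⊤) :
    (∀ F : Measure (Fin n → ℝ), Compatible (margG n G) F →
        ENNReal.ofReal ((1 / 2) * (1 - Real.sqrt n / 2 ^ (n - 1)) * S.card) ≤ expRev B p F) ∧
    ENNReal.ofReal ((1 / 2) * (1 - Real.sqrt n / 2 ^ (n - 1)) * S.card) ≤
      optRobust B (margG n G) :=
  independent_set_gives_robust_revenue_lower_bound_general n hsq G B S hS p hp
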